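/- arXiv:2211.01688 — 2 statements merged into one kernel-verified Lean document; each statement's English description precedes it below -/
import Mathlib

section
/- Let k, m, n be nonnegative integers with 0 ≤ k ≤ n and m ≥ 1, and let 0 < p < 1 with q = 1 - p. Then q^m ≤ B_{n+m,k}(p)/B_{n,k}(p) ≤ b_{n+m,k}(p)/b_{n,k}(p) ≤ q^m · ((n+1)/(n+1-k))^m. -/
open Real

/-- Binomial probability `b_{n,k}(p)`. -/
noncomputable def b (n k : ℕ) (p : ℝ) : ℝ :=
  (n.choose k : ℝ) * p ^ k * (1 - p) ^ (n - k)

/-- Lower tail probability `B_{n,k}(p)`. -/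
noncomputable def B (n k : ℕ) (p : ℝ) : ℝ :=
  ∑ j ∈ Finset.range (k + 1), (n.choose j : ℝ) * p ^ j * (1 - p) ^ (n - j)

/-! All three inequalities are proved term by term. The lower bound holds because
`C(n, j) ≤ C(n + m, j)` and `q ≤ 1`. Cross-multiplied, the middle one follows from the ratio
`C(N, j) / C(n, j)` (`n ≤ N`) being nondecreasing in `j`, and the upper one from
`C(N + 1, k) / C(N, k) = (N + 1) / (N + 1 - k)` being nonincreasing in `N`. -/

/- Multiply by `C(k, j)` and use `C(M, k) C(k, j) = C(M, j) C(M - j, k - j)`. -/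
theorem Nat.choose_mul_choose_le_choose_mul_choose {j k N M : ℕ} (hjk : j ≤ k) (hNM : N ≤ M) :
    M.choose j * N.choose k ≤ N.choose j * M.choose k := by
  refine Nat.le_of_mul_le_mul_right ?_ (Nat.choose_pos hjk)
  calc M.choose j * N.choose k * k.choose j
      = M.choose j * (N.choose j * (N - j).choose (k - j)) := by rw [mul_assoc, Nat.choose_mul hjk]
    _ ≤ M.choose j * (N.choose j * (M - j).choose (k - j)) := by gcongr
    _ = N.choose j * (M.choose k * k.choose j) := by rw [Nat.choose_mul hjk]; ring
    _ = N.choose j * M.choose k * k.choose j := by ring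

theorem Nat.succ_choose_mul_le {k n N : ℕ} (hkn : k ≤ n) (hnN : n ≤ N) :
    (N + 1).choose k * (n + 1 - k) ≤ N.choose k * (n + 1) := by
  refine Nat.le_of_mul_le_mul_right ?_ (by omega : 0 < N + 1 - k)
  obtain ⟨a, ha⟩ : ∃ a, n + 1 = a + k := ⟨n + 1 - k, by omega⟩
  obtain ⟨c, hc⟩ : ∃ c, N + 1 = c + k := ⟨N + 1 - k, by omega⟩
  have hac : a ≤ c := by omega
  calc (N + 1).choose k * (n + 1 - k) * (N + 1 - k)
      = N.choose k * ((c + k) * a) := by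
        rw [mul_right_comm, ← Nat.choose_mul_succ_eq, hc, ha]; simp only [Nat.add_sub_cancel]; ring
    _ ≤ N.choose k * ((a + k) * c) := Nat.mul_le_mul_left _ (by nlinarith)
    _ = N.choose k * (n + 1) * (N + 1 - k) := by rw [hc, ha, Nat.add_sub_cancel]; ring

theorem Nat.add_choose_mul_pow_le {k n : ℕ} (hkn : k ≤ n) (m : ℕ) :
    (n + m).choose k * (n + 1 - k) ^ m ≤ n.choose k * (n + 1) ^ m := by
  induction m with
  | zero => simp
  | succ m ih =>
    calc (n + (m + 1)).choose k * (n + 1 - k) ^ (m + 1)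
        = (n + m + 1).choose k * (n + 1 - k) * (n + 1 - k) ^ m := by rw [← add_assoc]; ring
      _ ≤ (n + m).choose k * (n + 1) * (n + 1 - k) ^ m :=
          Nat.mul_le_mul_right _ (Nat.succ_choose_mul_le hkn (by omega))
      _ ≤ n.choose k * (n + 1) ^ m * (n + 1) := by rw [mul_right_comm]; gcongr
      _ = n.choose k * (n + 1) ^ (m + 1) := by ring

theorem B_pos (n k : ℕ) {p : ℝ} (hp0 : 0 ≤ p) (hp1 : p < 1) : 0 < B n k p := by
  unfold B
  rw [Finset.sum_range_succ']
  have : 0 < (1 - p) ^ n := pow_pos (by linarith) n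
  refine add_pos_of_nonneg_of_pos (Finset.sum_nonneg fun j _ => ?_) (by simpa using this)
  have : 0 ≤ 1 - p := by linarith
  positivity

theorem b_pos {n k : ℕ} (hkn : k ≤ n) {p : ℝ} (hp0 : 0 < p) (hp1 : p < 1) : 0 < b n k p := by
  have : 0 < 1 - p := by linarith
  have : 0 < (n.choose k : ℝ) := by exact_mod_cast Nat.choose_pos hkn
  unfold b
  positivity

theorem pow_mul_B_le_B_add (n m k : ℕ) {p : ℝ} (hp0 : 0 ≤ p) (hp1 : p ≤ 1) :
    (1 - p) ^ m * B n k p ≤ B (n + m) k p := by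
  have hq0 : 0 ≤ 1 - p := by linarith
  unfold B
  rw [Finset.mul_sum]
  refine Finset.sum_le_sum fun j _ => ?_
  have hchoose : (n.choose j : ℝ) ≤ (n + m).choose j := by
    exact_mod_cast Nat.choose_le_choose j (Nat.le_add_right n m)
  have hpow : (1 - p) ^ m * (1 - p) ^ (n - j) ≤ (1 - p) ^ (n + m - j) := by
    rw [← pow_add]; exact pow_le_pow_of_le_one hq0 (by linarith) (by omega)
  calc (1 - p) ^ m * ((n.choose j : ℝ) * p ^ j * (1 - p) ^ (n - j))
      = n.choose j * p ^ j * ((1 - p) ^ m * (1 - p) ^ (n - j)) := by ring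
    _ ≤ (n + m).choose j * p ^ j * (1 - p) ^ (n + m - j) := by gcongr

theorem B_mul_b_le_b_mul_B {k n N : ℕ} (hkn : k ≤ n) (hnN : n ≤ N) {p : ℝ} (hp0 : 0 ≤ p)
    (hp1 : p ≤ 1) : B N k p * b n k p ≤ b N k p * B n k p := by
  have hq0 : 0 ≤ 1 - p := by linarith
  unfold B b
  rw [Finset.sum_mul, Finset.mul_sum]
  refine Finset.sum_le_sum fun j hj => ?_
  have hjk : j ≤ k := Nat.lt_succ_iff.mp (Finset.mem_range.mp hj)
  have hchoose : ((N.choose j * n.choose k : ℕ) : ℝ) ≤ (n.choose j * N.choose k : ℕ) := by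
    exact_mod_cast Nat.choose_mul_choose_le_choose_mul_choose hjk hnN
  have hexp : N - j + (n - k) = N - k + (n - j) := by omega
  calc (N.choose j : ℝ) * p ^ j * (1 - p) ^ (N - j) * (n.choose k * p ^ k * (1 - p) ^ (n - k))
      = ((N.choose j * n.choose k : ℕ) : ℝ) * (p ^ j * p ^ k * (1 - p) ^ (N - j + (n - k))) := by
        push_cast; ring
    _ ≤ ((n.choose j * N.choose k : ℕ) : ℝ) * (p ^ j * p ^ k * (1 - p) ^ (N - k + (n - j))) := by
        rw [hexp]; gcongr
    _ = N.choose k * p ^ k * (1 - p) ^ (N - k) * (n.choose j * p ^ j * (1 - p) ^ (n - j)) := by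
        push_cast; ring

theorem b_add_le_mul_b {k n : ℕ} (hkn : k ≤ n) (m : ℕ) {p : ℝ} (hp0 : 0 ≤ p) (hp1 : p ≤ 1) :
    b (n + m) k p ≤ (1 - p) ^ m * (((n : ℝ) + 1) / ((n : ℝ) + 1 - k)) ^ m * b n k p := by
  have hq0 : 0 ≤ 1 - p := by linarith
  have hgap : (0 : ℝ) < (n : ℝ) + 1 - k := by
    have : (k : ℝ) ≤ n := by exact_mod_cast hkn
    linarith
  have hchoose :
      ((n + m).choose k : ℝ) * ((n : ℝ) + 1 - k) ^ m ≤ n.choose k * ((n : ℝ) + 1) ^ m := by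
    have h := Nat.add_choose_mul_pow_le hkn m
    rw [← Nat.cast_le (α := ℝ)] at h
    push_cast [Nat.sub_add_comm hkn, Nat.cast_sub hkn] at h
    rwa [sub_add_eq_add_sub] at h
  have hratio : ((n + m).choose k : ℝ) ≤ n.choose k * (((n : ℝ) + 1) / ((n : ℝ) + 1 - k)) ^ m := by
    rw [div_pow, ← mul_div_assoc, le_div_iff₀ (by positivity)]
    exact hchoose
  unfold b
  rw [show n + m - k = n - k + m by omega, pow_add]
  calc ((n + m).choose k : ℝ) * p ^ k * ((1 - p) ^ (n - k) * (1 - p) ^ m)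
      ≤ n.choose k * (((n : ℝ) + 1) / ((n : ℝ) + 1 - k)) ^ m * p ^ k *
          ((1 - p) ^ (n - k) * (1 - p) ^ m) := by gcongr
    _ = _ := by ring

theorem binomial_ratio_in_n_bounds_general
    (k m n : ℕ) (hkn : k ≤ n) (p : ℝ) (hp0 : 0 < p) (hp1 : p < 1) :
    (1 - p) ^ m ≤ B (n + m) k p / B n k p ∧
    B (n + m) k p / B n k p ≤ b (n + m) k p / b n k p ∧
    b (n + m) k p / b n k p ≤ (1 - p) ^ m * (((n : ℝ) + 1) / ((n : ℝ) + 1 - k)) ^ m := by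
  have hB := B_pos n k hp0.le hp1
  have hb := b_pos hkn hp0 hp1
  refine ⟨?_, ?_, ?_⟩
  · rw [le_div_iff₀ hB]
    exact pow_mul_B_le_B_add n m k hp0.le hp1.le
  · rw [div_le_div_iff₀ hB hb]
    exact B_mul_b_le_b_mul_B hkn (Nat.le_add_right n m) hp0.le hp1.le
  · rw [div_le_iff₀ hb]
    exact b_add_le_mul_b hkn m hp0.le hp1.le

theorem binomial_ratio_in_n_bounds
    (k m n : ℕ) (hkn : k ≤ n) (hm : 1 ≤ m) (p : ℝ) (hp0 : 0 < p) (hp1 : p < 1) :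
    (1 - p) ^ m ≤ B (n + m) k p / B n k p ∧
    B (n + m) k p / B n k p ≤ b (n + m) k p / b n k p ∧
    b (n + m) k p / b n k p ≤ (1 - p) ^ m * (((n : ℝ) + 1) / ((n : ℝ) + 1 - k)) ^ m :=
  binomial_ratio_in_n_bounds_general k m n hkn p hp0 hp1
end

section
/- Let n > 0 be a real number and 0 ≤ f < p < 1 with q = 1 - p. Then max{1, (1-f)·p/(p-f) - f·p·q·(1-f)/((p-f)³·n)} ≤ L(n,f·n,p) ≤ (1-f)·p/(p-f), and both inequalities are strict when f > 0. Moreover, for 0 < f, p < 1 the function n ↦ L(n,f·n,p) is strictly increasing and strictly concave on (0,∞). -/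
/-!
`L(n, k, p)` is the larger root of `x² - (k + 1 - pn)x - p(n - k)`. Along `k = fn` this quadratic
equals `x(x - 1) - n(p - f)(U - x)` with `U = (1 - f)p/(p - f)`, so every bound is a sign check:
the quadratic is `-k(1 - p) ≤ 0` at `1`, equals `U(U - 1) ≥ 0` at `U`, and since the
correction `δ = fpq(1 - f)/((p - f)³n)` satisfies `n(p - f)δ = U(U - 1)`, it equals
`-δ(2U - 1 - δ)` at `U - δ`.

For the shape in `n`, `L(m, fm, p) = (1 - bm + √(b²m² + 2cm + 1))/2` with `b = p - f` and
`c = b + 2(1 - p)f`, where `c² - b² = 4pq f(1 - f) > 0`. Reverse Cauchy–Schwarz for the Lorentzian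
form behind the radicand gives strict concavity, and `b√(b²m² + 2cm + 1) < b²m + c` strict
monotonicity of the radical minus `bm`.
-/

open Real

/-- `L(n,k,p)` with real arguments. -/
noncomputable def L (n k p : ℝ) : ℝ :=
  (k + 1 - p * n + Real.sqrt ((p * n - k + 1) ^ 2 + 4 * (1 - p) * k)) / 2

noncomputable def largerRoot (B C : ℝ) : ℝ :=
  (B + √(B ^ 2 + 4 * C)) / 2

section largerRoot

variable {B C x : ℝ}

theorem le_largerRoot (h : x ^ 2 - B * x - C ≤ 0) : x ≤ largerRoot B C := by
  have : 2 * x - B ≤ √(B ^ 2 + 4 * C) := Real.le_sqrt_of_sq_le (by nlinarith)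
  unfold largerRoot; linarith

theorem lt_largerRoot (h : x ^ 2 - B * x - C < 0) : x < largerRoot B C := by
  have : 2 * x - B < √(B ^ 2 + 4 * C) := Real.lt_sqrt_of_sq_lt (by nlinarith)
  unfold largerRoot; linarith

theorem largerRoot_le (hx : B ≤ 2 * x) (h : 0 ≤ x ^ 2 - B * x - C) : largerRoot B C ≤ x := by
  have : √(B ^ 2 + 4 * C) ≤ 2 * x - B := (Real.sqrt_le_left (by linarith)).2 (by nlinarith)
  unfold largerRoot; linarith

theorem largerRoot_lt (hx : B < 2 * x) (h : 0 < x ^ 2 - B * x - C) : largerRoot B C < x := by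
  have : √(B ^ 2 + 4 * C) < 2 * x - B := (Real.sqrt_lt' (by linarith)).2 (by nlinarith)
  unfold largerRoot; linarith

end largerRoot

theorem L_eq_largerRoot (n k p : ℝ) : L n k p = largerRoot (k + 1 - p * n) (p * (n - k)) := by
  unfold L largerRoot
  rw [show (p * n - k + 1) ^ 2 + 4 * (1 - p) * k = (k + 1 - p * n) ^ 2 + 4 * (p * (n - k)) by ring]

theorem L_mul_eq (m f p : ℝ) :
    L m (f * m) p
      = (1 - (p - f) * m + √((p - f) ^ 2 * m ^ 2 + 2 * (p - f + 2 * (1 - p) * f) * m + 1)) / 2 := by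
  unfold L
  rw [show (p * m - f * m + 1) ^ 2 + 4 * (1 - p) * (f * m)
      = (p - f) ^ 2 * m ^ 2 + 2 * (p - f + 2 * (1 - p) * f) * m + 1 by ring]
  ring

theorem one_le_L {n k p : ℝ} (hk : 0 ≤ k) (hp : p ≤ 1) : 1 ≤ L n k p := by
  rw [L_eq_largerRoot]
  exact le_largerRoot (by nlinarith [mul_nonneg hk (sub_nonneg.2 hp)])

theorem one_lt_L {n k p : ℝ} (hk : 0 < k) (hp : p < 1) : 1 < L n k p := by
  rw [L_eq_largerRoot]
  exact lt_largerRoot (by nlinarith [mul_pos hk (sub_pos.2 hp)])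

section alongRay

variable {n f p : ℝ}

theorem quadratic_along_mul_eq (hfp : f ≠ p) (x : ℝ) :
    x ^ 2 - (f * n + 1 - p * n) * x - p * (n - f * n)
      = x * (x - 1) - n * (p - f) * ((1 - f) * p / (p - f) - x) := by
  have : p - f ≠ 0 := sub_ne_zero.2 hfp.symm
  field_simp
  ring

theorem one_le_one_sub_mul_div_sub (hf : 0 ≤ f) (hfp : f < p) (hp : p ≤ 1) :
    1 ≤ (1 - f) * p / (p - f) := by
  rw [le_div_iff₀ (sub_pos.2 hfp)]
  nlinarith [mul_nonneg hf (sub_nonneg.2 hp)]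

theorem one_lt_one_sub_mul_div_sub (hf : 0 < f) (hfp : f < p) (hp : p < 1) :
    1 < (1 - f) * p / (p - f) := by
  rw [lt_div_iff₀ (sub_pos.2 hfp)]
  nlinarith [mul_pos hf (sub_pos.2 hp)]

theorem L_mul_le (hn : 0 ≤ n) (hf : 0 ≤ f) (hfp : f < p) (hp : p ≤ 1) :
    L n (f * n) p ≤ (1 - f) * p / (p - f) := by
  have hU := one_le_one_sub_mul_div_sub hf hfp hp
  rw [L_eq_largerRoot]
  refine largerRoot_le (by nlinarith [mul_nonneg (sub_pos.2 hfp).le hn]) ?_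
  rw [quadratic_along_mul_eq hfp.ne, sub_self, mul_zero, sub_zero]
  nlinarith

theorem L_mul_lt (hn : 0 ≤ n) (hf : 0 < f) (hfp : f < p) (hp : p < 1) :
    L n (f * n) p < (1 - f) * p / (p - f) := by
  have hU := one_lt_one_sub_mul_div_sub hf hfp hp
  rw [L_eq_largerRoot]
  refine largerRoot_lt (by nlinarith [mul_nonneg (sub_pos.2 hfp).le hn]) ?_
  rw [quadratic_along_mul_eq hfp.ne, sub_self, mul_zero, sub_zero]
  nlinarith

theorem quadratic_along_mul_at_lower_bound (hn : n ≠ 0) (hfp : f ≠ p) :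
    let U := (1 - f) * p / (p - f)
    let δ := f * p * (1 - p) * (1 - f) / ((p - f) ^ 3 * n)
    (U - δ) ^ 2 - (f * n + 1 - p * n) * (U - δ) - p * (n - f * n) = -(δ * (U - δ + U - 1)) := by
  intro U δ
  have : p - f ≠ 0 := sub_ne_zero.2 hfp.symm
  have hcorr : n * (p - f) * δ = U * (U - 1) := by
    simp only [U, δ]
    field_simp
    ring
  rw [quadratic_along_mul_eq hfp]
  linear_combination -hcorr

theorem le_L_mul (hn : 0 < n) (hf : 0 ≤ f) (hfp : f < p) (hp : p ≤ 1) :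
    (1 - f) * p / (p - f) - f * p * (1 - p) * (1 - f) / ((p - f) ^ 3 * n) ≤ L n (f * n) p := by
  rcases le_or_gt ((1 - f) * p / (p - f) - f * p * (1 - p) * (1 - f) / ((p - f) ^ 3 * n)) 1
    with hX | hX
  · exact hX.trans (one_le_L (mul_nonneg hf hn.le) hp)
  have hU := one_le_one_sub_mul_div_sub hf hfp hp
  have hδ : 0 ≤ f * p * (1 - p) * (1 - f) / ((p - f) ^ 3 * n) := by
    have hp0 : 0 ≤ p := hf.trans hfp.le
    exact div_nonneg (by nlinarith [mul_nonneg (mul_nonneg hf hp0) (sub_nonneg.2 hp)])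
      (mul_nonneg (pow_nonneg (sub_pos.2 hfp).le 3) hn.le)
  rw [L_eq_largerRoot]
  refine le_largerRoot ?_
  rw [quadratic_along_mul_at_lower_bound hn.ne' hfp.ne]
  exact neg_nonpos.2 (mul_nonneg hδ (by linarith))

theorem lt_L_mul (hn : 0 < n) (hf : 0 < f) (hfp : f < p) (hp : p < 1) :
    (1 - f) * p / (p - f) - f * p * (1 - p) * (1 - f) / ((p - f) ^ 3 * n) < L n (f * n) p := by
  rcases le_or_gt ((1 - f) * p / (p - f) - f * p * (1 - p) * (1 - f) / ((p - f) ^ 3 * n)) 1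
    with hX | hX
  · exact hX.trans_lt (one_lt_L (mul_pos hf hn) hp)
  have hU := one_le_one_sub_mul_div_sub hf.le hfp hp.le
  have hδ : 0 < f * p * (1 - p) * (1 - f) / ((p - f) ^ 3 * n) := by
    have hp0 : 0 < p := hf.trans hfp
    exact div_pos (mul_pos (mul_pos (mul_pos hf hp0) (sub_pos.2 hp)) (by linarith))
      (mul_pos (pow_pos (sub_pos.2 hfp) 3) hn)
  rw [L_eq_largerRoot]
  refine lt_largerRoot ?_
  rw [quadratic_along_mul_at_lower_bound hn.ne' hfp.ne]
  exact neg_neg_of_pos (mul_pos hδ (by linarith))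

end alongRay

section sqrtQuadratic

variable {b c : ℝ}

theorem quadratic_pos_of_nonneg (hc : 0 ≤ c) {m : ℝ} (hm : 0 ≤ m) :
    0 < b ^ 2 * m ^ 2 + 2 * c * m + 1 := by
  positivity

theorem mul_sqrt_quadratic_lt (hc : 0 < c) (hbc : b ^ 2 < c ^ 2) {m : ℝ} (hm : 0 ≤ m) :
    b * √(b ^ 2 * m ^ 2 + 2 * c * m + 1) < b ^ 2 * m + c :=
  calc b * √(b ^ 2 * m ^ 2 + 2 * c * m + 1)
      ≤ |b| * √(b ^ 2 * m ^ 2 + 2 * c * m + 1) :=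
        mul_le_mul_of_nonneg_right (le_abs_self b) (Real.sqrt_nonneg _)
    _ = √(b ^ 2 * (b ^ 2 * m ^ 2 + 2 * c * m + 1)) := by
        rw [Real.sqrt_mul (sq_nonneg b), Real.sqrt_sq_eq_abs]
    _ < b ^ 2 * m + c := (Real.sqrt_lt' (by positivity)).2 (by nlinarith)

theorem strictMonoOn_sqrt_quadratic_sub (hc : 0 < c) (hbc : b ^ 2 < c ^ 2) :
    StrictMonoOn (fun m ↦ √(b ^ 2 * m ^ 2 + 2 * c * m + 1) - b * m) (Set.Ici 0) := by
  intro x (hx : 0 ≤ x) y (hy : 0 ≤ y) hxy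
  have hQx := Real.sq_sqrt (quadratic_pos_of_nonneg (b := b) hc.le hx).le
  have hQy := Real.sq_sqrt (quadratic_pos_of_nonneg (b := b) hc.le hy).le
  have hSx := Real.sqrt_pos.2 (quadratic_pos_of_nonneg (b := b) hc.le hx)
  have hSy := Real.sqrt_pos.2 (quadratic_pos_of_nonneg (b := b) hc.le hy)
  set Sx := √(b ^ 2 * x ^ 2 + 2 * c * x + 1)
  set Sy := √(b ^ 2 * y ^ 2 + 2 * c * y + 1)
  have hdiff : (Sy - Sx) * (Sy + Sx) = (y - x) * (b ^ 2 * (x + y) + 2 * c) := by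
    linear_combination hQy - hQx
  have hsum : b * (Sy + Sx) < b ^ 2 * (x + y) + 2 * c := by
    linarith [mul_sqrt_quadratic_lt hc hbc hx, mul_sqrt_quadratic_lt hc hbc hy]
  have : b * (y - x) * (Sy + Sx) < (Sy - Sx) * (Sy + Sx) := by
    rw [hdiff]
    nlinarith [mul_lt_mul_of_pos_left hsum (sub_pos.2 hxy)]
  have := lt_of_mul_lt_mul_right this (add_pos hSy hSx).le
  show Sx - b * x < Sy - b * y
  linarith

/-- Reverse Cauchy–Schwarz for the Lorentzian form `b²xy + c(x + y) + 1`: its square exceeds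
the product of its diagonal values by `(c² - b²)(x - y)²`. -/
theorem sqrt_quadratic_mul_sqrt_quadratic_lt (hc : 0 < c) (hbc : b ^ 2 < c ^ 2) {x y : ℝ}
    (hx : 0 ≤ x) (hy : 0 ≤ y) (hxy : x ≠ y) :
    √(b ^ 2 * x ^ 2 + 2 * c * x + 1) * √(b ^ 2 * y ^ 2 + 2 * c * y + 1)
      < b ^ 2 * x * y + c * (x + y) + 1 := by
  rw [← Real.sqrt_mul (quadratic_pos_of_nonneg hc.le hx).le]
  have hxy2 : 0 < (x - y) ^ 2 := by positivity [sub_ne_zero.2 hxy]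
  exact (Real.sqrt_lt' (by positivity)).2 (by nlinarith [mul_pos (sub_pos.2 hbc) hxy2])

theorem strictConcaveOn_sqrt_quadratic (hc : 0 < c) (hbc : b ^ 2 < c ^ 2) :
    StrictConcaveOn ℝ (Set.Ici 0) (fun m ↦ √(b ^ 2 * m ^ 2 + 2 * c * m + 1)) := by
  refine ⟨convex_Ici 0, fun x (hx : 0 ≤ x) y (hy : 0 ≤ y) hxy t s ht hs hts ↦ ?_⟩
  simp only [smul_eq_mul]
  apply Real.lt_sqrt_of_sq_lt
  have hsm := sqrt_quadratic_mul_sqrt_quadratic_lt hc hbc hx hy hxy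
  have hQx := Real.sq_sqrt (quadratic_pos_of_nonneg (b := b) hc.le hx).le
  have hQy := Real.sq_sqrt (quadratic_pos_of_nonneg (b := b) hc.le hy).le
  have hexp : (t * √(b ^ 2 * x ^ 2 + 2 * c * x + 1) + s * √(b ^ 2 * y ^ 2 + 2 * c * y + 1)) ^ 2
      = t ^ 2 * (b ^ 2 * x ^ 2 + 2 * c * x + 1) + s ^ 2 * (b ^ 2 * y ^ 2 + 2 * c * y + 1)
        + 2 * t * s * (√(b ^ 2 * x ^ 2 + 2 * c * x + 1) * √(b ^ 2 * y ^ 2 + 2 * c * y + 1)) := by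
    linear_combination t ^ 2 * hQx + s ^ 2 * hQy
  have hpolar : b ^ 2 * (t * x + s * y) ^ 2 + 2 * c * (t * x + s * y) + 1
      = t ^ 2 * (b ^ 2 * x ^ 2 + 2 * c * x + 1) + s ^ 2 * (b ^ 2 * y ^ 2 + 2 * c * y + 1)
        + 2 * t * s * (b ^ 2 * x * y + c * (x + y) + 1) := by
    obtain rfl : s = 1 - t := by linarith
    ring
  rw [hexp, hpolar]
  linarith [mul_lt_mul_of_pos_left hsm (by positivity : (0 : ℝ) < 2 * t * s)]

end sqrtQuadratic

section alongRayShape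

variable {f p : ℝ}

theorem ray_coefficients (hf0 : 0 < f) (hf1 : f < 1) (hp0 : 0 < p) (hp1 : p < 1) :
    0 < p - f + 2 * (1 - p) * f ∧ (p - f) ^ 2 < (p - f + 2 * (1 - p) * f) ^ 2 := by
  have hdiff : 0 < 2 * (1 - p) * f := by have := sub_pos.2 hp1; positivity
  have hsum : 0 < 2 * p * (1 - f) := by have := sub_pos.2 hf1; positivity
  refine ⟨by linarith, ?_⟩
  nlinarith [mul_pos hdiff hsum]

theorem strictMonoOn_L_mul (hf0 : 0 < f) (hf1 : f < 1) (hp0 : 0 < p) (hp1 : p < 1) :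
    StrictMonoOn (fun m : ℝ ↦ L m (f * m) p) (Set.Ioi 0) := by
  obtain ⟨hc, hbc⟩ := ray_coefficients hf0 hf1 hp0 hp1
  intro x hx y hy hxy
  have := strictMonoOn_sqrt_quadratic_sub hc hbc (Set.Ioi_subset_Ici_self hx)
    (Set.Ioi_subset_Ici_self hy) hxy
  simp only [L_mul_eq] at this ⊢
  linarith

theorem strictConcaveOn_L_mul (hf0 : 0 < f) (hf1 : f < 1) (hp0 : 0 < p) (hp1 : p < 1) :
    StrictConcaveOn ℝ (Set.Ioi 0) (fun m : ℝ ↦ L m (f * m) p) := by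
  obtain ⟨hc, hbc⟩ := ray_coefficients hf0 hf1 hp0 hp1
  have hsqrt := (strictConcaveOn_sqrt_quadratic hc hbc).subset Set.Ioi_subset_Ici_self
    (convex_Ioi 0)
  refine ⟨convex_Ioi 0, fun x hx y hy hxy t s ht hs hts ↦ ?_⟩
  have := hsqrt.2 hx hy hxy ht hs hts
  simp only [smul_eq_mul, L_mul_eq] at this ⊢
  obtain rfl : s = 1 - t := by linarith
  linarith

end alongRayShape

theorem L_along_fn_bounds
    (n f p : ℝ) (hn : 0 < n) (hf0 : 0 ≤ f) (hfp : f < p) (hp1 : p < 1) :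
    (max 1 ((1 - f) * p / (p - f) - f * p * (1 - p) * (1 - f) / ((p - f) ^ 3 * n))
        ≤ L n (f * n) p ∧
      L n (f * n) p ≤ (1 - f) * p / (p - f)) ∧
    (0 < f →
      max 1 ((1 - f) * p / (p - f) - f * p * (1 - p) * (1 - f) / ((p - f) ^ 3 * n))
          < L n (f * n) p ∧
        L n (f * n) p < (1 - f) * p / (p - f)) ∧
    (∀ f' p' : ℝ, 0 < f' → f' < 1 → 0 < p' → p' < 1 →
      StrictMonoOn (fun m : ℝ => L m (f' * m) p') (Set.Ioi 0) ∧
      StrictConcaveOn ℝ (Set.Ioi 0) (fun m : ℝ => L m (f' * m) p')) := by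
  refine ⟨⟨max_le (one_le_L (mul_nonneg hf0 hn.le) hp1.le) (le_L_mul hn hf0 hfp hp1.le),
      L_mul_le hn.le hf0 hfp hp1.le⟩,
    fun hf ↦ ⟨max_lt (one_lt_L (mul_pos hf hn) hp1) (lt_L_mul hn hf hfp hp1),
      L_mul_lt hn.le hf hfp hp1⟩,
    fun f' p' hf'0 hf'1 hp'0 hp'1 ↦
      ⟨strictMonoOn_L_mul hf'0 hf'1 hp'0 hp'1, strictConcaveOn_L_mul hf'0 hf'1 hp'0 hp'1⟩⟩
end
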